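/- arXiv:math/0310329 — 7 statements merged into one kernel-verified Lean document; each statement's English description precedes it below -/
import Mathlib

section
/- Let (V, g) be a real inner product space of dimension 2n (n ≥ 1). The assignment I ↦ V_I^{1,0} is a bijection from the set of complex structures I on V that are g-isometries (g(Ix, Iy) = g(x, y) for all x, y ∈ V) onto the set of n-dimensional isotropic complex subspaces of V_ℂ. -/
/-!
Write `w ∈ V_ℂ` as `a + i b` with `a b : V`. For a complex structure `I`, the eigenspace
`V_I^{1,0}` is the graph `{a - i I a}`, so `I` is recovered from it and the real part maps it
isomorphically onto `V`; isotropy of the graph is `⟪a, c⟫ = ⟪I a, I c⟫` (real part of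
`g_ℂ`) together with `⟪a, I c⟫ = -⟪I a, c⟫` (imaginary part), which follows from the first.
Conversely an isotropic `W` meets `i V` trivially, because `g_ℂ(i b, i b) = -‖b‖²`, so when
`dim_ℂ W = n` the real part is an isomorphism `W ≃ V`. Then `W` is the graph of an operator
`-I`, and `i W = W` forces `I² = -1`.
-/

open TensorProduct Module

def LinearMap.BilinForm.IsIsotropic {R M : Type*} [CommSemiring R] [AddCommMonoid M]
    [Module R M] (B : LinearMap.BilinForm R M) (W : Submodule R M) : Prop :=
  ∀ w ∈ W, ∀ w' ∈ W, B w w' = 0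

theorem Submodule.finrank_restrictScalars_real {M : Type*} [AddCommGroup M] [Module ℂ M]
    [Module ℝ M] [IsScalarTower ℝ ℂ M] (W : Submodule ℂ M) :
    finrank ℝ (W.restrictScalars ℝ) = 2 * finrank ℂ W := by
  rw [((Submodule.restrictScalarsEquiv ℝ ℂ M W).restrictScalars ℝ).finrank_eq,
    ← Module.finrank_mul_finrank ℝ ℂ W, Complex.finrank_real_complex]

namespace Complexification

section Module

variable {V : Type*} [AddCommGroup V] [Module ℝ V]

variable (V) in
noncomputable def re : ℂ ⊗[ℝ] V →ₗ[ℝ] V :=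
  TensorProduct.lift ((LinearMap.lsmul ℝ V).comp Complex.reLm)

variable (V) in
noncomputable def im : ℂ ⊗[ℝ] V →ₗ[ℝ] V :=
  TensorProduct.lift ((LinearMap.lsmul ℝ V).comp Complex.imLm)

/-- `a ⊗ 1 + b ⊗ i`, with the `ℂ` factor written on the left. -/
noncomputable def mk (a b : V) : ℂ ⊗[ℝ] V :=
  (1 : ℂ) ⊗ₜ a + Complex.I • (1 : ℂ) ⊗ₜ b

@[simp] theorem re_tmul (z : ℂ) (v : V) : re V (z ⊗ₜ v) = z.re • v := rfl

@[simp] theorem im_tmul (z : ℂ) (v : V) : im V (z ⊗ₜ v) = z.im • v := rfl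

theorem re_I_smul (w : ℂ ⊗[ℝ] V) : re V (Complex.I • w) = -im V w := by
  induction w using TensorProduct.induction_on with
  | zero => simp
  | tmul z v => simp [smul_tmul']
  | add x y hx hy => rw [smul_add, map_add, map_add, hx, hy, neg_add]

theorem im_I_smul (w : ℂ ⊗[ℝ] V) : im V (Complex.I • w) = re V w := by
  induction w using TensorProduct.induction_on with
  | zero => simp
  | tmul z v => simp [smul_tmul']
  | add x y hx hy => rw [smul_add, map_add, map_add, hx, hy]

@[simp] theorem re_mk (a b : V) : re V (mk a b) = a := by
  simp [mk, re_I_smul]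

@[simp] theorem im_mk (a b : V) : im V (mk a b) = b := by
  simp [mk, im_I_smul]

theorem mk_re_im (w : ℂ ⊗[ℝ] V) : mk (re V w) (im V w) = w := by
  induction w using TensorProduct.induction_on with
  | zero => simp [mk]
  | tmul z v =>
      rw [mk, re_tmul, im_tmul, smul_tmul', ← smul_tmul, ← smul_tmul, ← add_tmul]
      congr 1
      apply Complex.ext <;> simp
  | add x y hx hy =>
      conv_rhs => rw [← hx, ← hy]
      simp only [mk, map_add, tmul_add, smul_add]
      abel

theorem mk_inj {a b c d : V} : mk a b = mk c d ↔ a = c ∧ b = d :=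
  ⟨fun h => ⟨by simpa using congrArg (re V) h, by simpa using congrArg (im V) h⟩,
    fun ⟨hac, hbd⟩ => hac ▸ hbd ▸ rfl⟩

theorem I_smul_mk (a b : V) : Complex.I • mk a b = mk (-b) a := by
  rw [← mk_re_im (Complex.I • mk a b), re_I_smul, im_I_smul, re_mk, im_mk]

theorem baseChange_mk (f : Module.End ℝ V) (a b : V) :
    f.baseChange ℂ (mk a b) = mk (f a) (f b) := by
  simp [mk, LinearMap.baseChange_tmul]

variable {I : Module.End ℝ V}

theorem mk_mem_eigenspace_iff (hI : I ∘ₗ I = -LinearMap.id) (a b : V) :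
    mk a b ∈ Module.End.eigenspace (I.baseChange ℂ) Complex.I ↔ b = -I a := by
  have hII : I (I a) = -a := by simpa using LinearMap.congr_fun hI a
  rw [Module.End.mem_eigenspace_iff, baseChange_mk, I_smul_mk, mk_inj]
  constructor
  · rintro ⟨h, -⟩
    rw [h, neg_neg]
  · rintro rfl
    simp [hII]

theorem mem_eigenspace_iff (hI : I ∘ₗ I = -LinearMap.id) (w : ℂ ⊗[ℝ] V) :
    w ∈ Module.End.eigenspace (I.baseChange ℂ) Complex.I ↔ mk (re V w) (-I (re V w)) = w := by
  conv_lhs => rw [← mk_re_im w]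
  rw [mk_mem_eigenspace_iff hI]
  constructor
  · intro h
    conv_rhs => rw [← mk_re_im w, h]
  · intro h
    exact (congrArg (im V) h).symm.trans (im_mk _ _)

theorem re_bijective_eigenspace (hI : I ∘ₗ I = -LinearMap.id) :
    Function.Bijective
      (re V ∘ₗ ((Module.End.eigenspace (I.baseChange ℂ) Complex.I).restrictScalars ℝ).subtype) := by
  refine ⟨fun w w' h => Subtype.ext ?_, fun a => ⟨⟨mk a (-I a), ?_⟩, re_mk _ _⟩⟩
  · rw [← (mem_eigenspace_iff hI _).mp w.2, ← (mem_eigenspace_iff hI _).mp w'.2]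
    exact congrArg (fun a => mk a (-I a)) h
  · exact (mk_mem_eigenspace_iff hI a _).mpr rfl

theorem finrank_eq_two_mul_of_bijective_re (W : Submodule ℂ (ℂ ⊗[ℝ] V))
    (hW : Function.Bijective (re V ∘ₗ (W.restrictScalars ℝ).subtype)) :
    finrank ℝ V = 2 * finrank ℂ W := by
  rw [← (LinearEquiv.ofBijective _ hW).finrank_eq, Submodule.finrank_restrictScalars_real]

theorem eigenspace_injective {I J : Module.End ℝ V} (hI : I ∘ₗ I = -LinearMap.id)
    (hJ : J ∘ₗ J = -LinearMap.id)
    (h : Module.End.eigenspace (I.baseChange ℂ) Complex.I =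
      Module.End.eigenspace (J.baseChange ℂ) Complex.I) : I = J := by
  ext v
  have hv : mk v (-I v) ∈ Module.End.eigenspace (J.baseChange ℂ) Complex.I :=
    h ▸ (mk_mem_eigenspace_iff hI v _).mpr rfl
  exact neg_injective ((mk_mem_eigenspace_iff hJ v _).mp hv)

theorem exists_eigenspace_eq (W : Submodule ℂ (ℂ ⊗[ℝ] V))
    (hW : Function.Bijective (re V ∘ₗ (W.restrictScalars ℝ).subtype)) :
    ∃ I : Module.End ℝ V, I ∘ₗ I = -LinearMap.id ∧
      Module.End.eigenspace (I.baseChange ℂ) Complex.I = W := by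
  let e := LinearEquiv.ofBijective _ hW
  let I : Module.End ℝ V := -(im V ∘ₗ (W.restrictScalars ℝ).subtype ∘ₗ e.symm.toLinearMap)
  have re_symm (v : V) : re V (e.symm v) = v := e.apply_symm_apply v
  have mk_eq_symm (v : V) : mk v (-I v) = e.symm v := by
    conv_rhs => rw [← mk_re_im (e.symm v : ℂ ⊗[ℝ] V), re_symm]
    simp [I]
  have symm_re {w : ℂ ⊗[ℝ] V} (hw : w ∈ W) : (e.symm (re V w) : ℂ ⊗[ℝ] V) = w :=
    congrArg Subtype.val (e.symm_apply_apply ⟨w, hw⟩)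
  have hII (v : V) : I (I v) = -v := by
    have hmem : Complex.I • mk v (-I v) ∈ W := mk_eq_symm v ▸ W.smul_mem _ (e.symm v).2
    rw [I_smul_mk, neg_neg] at hmem
    have := symm_re hmem
    rw [re_mk, ← mk_eq_symm, mk_inj] at this
    exact neg_eq_iff_eq_neg.mp this.2
  have hI : I ∘ₗ I = -LinearMap.id := LinearMap.ext fun v => by simpa using hII v
  refine ⟨I, hI, SetLike.ext fun w => ?_⟩
  rw [mem_eigenspace_iff hI, mk_eq_symm]
  exact ⟨fun h => h ▸ (e.symm _).2, symm_re⟩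

end Module

section InnerProduct

variable {V : Type*} [NormedAddCommGroup V] [InnerProductSpace ℝ V]

local notation "gℂ" => LinearMap.BilinForm.baseChange ℂ (innerₗ V)

theorem baseChange_inner_mk (a b c d : V) :
    gℂ (mk a b) (mk c d) =
      ((inner ℝ a c - inner ℝ b d : ℝ) : ℂ) +
        ((inner ℝ a d + inner ℝ b c : ℝ) : ℂ) * Complex.I := by
  simp only [mk, map_add, LinearMap.map_smul, LinearMap.add_apply, LinearMap.smul_apply,
    LinearMap.BilinForm.baseChange_tmul, innerₗ_apply_apply, smul_eq_mul, Complex.real_smul,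
    mul_one]
  push_cast
  ring_nf
  rw [Complex.I_sq]
  ring

theorem re_injective_of_isIsotropic {W : Submodule ℂ (ℂ ⊗[ℝ] V)} (hW : (gℂ).IsIsotropic W) :
    Function.Injective (re V ∘ₗ (W.restrictScalars ℝ).subtype) := by
  rw [← LinearMap.ker_eq_bot, LinearMap.ker_eq_bot']
  rintro ⟨w, hw⟩ (h0 : re V w = 0)
  have hww := hW w hw w hw
  rw [← mk_re_im w, h0, baseChange_inner_mk] at hww
  have hb : im V w = 0 := by
    have := congrArg Complex.re hww
    simp only [inner_zero_left, zero_sub, Complex.add_re, Complex.ofReal_re,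
      Complex.zero_re] at this
    simpa using this
  refine Subtype.ext (?_ : w = 0)
  rw [← mk_re_im w, h0, hb]
  simp [mk]

theorem isIsotropic_eigenspace_iff {I : Module.End ℝ V} (hI : I ∘ₗ I = -LinearMap.id) :
    (gℂ).IsIsotropic (Module.End.eigenspace (I.baseChange ℂ) Complex.I) ↔
      ∀ x y : V, inner ℝ (I x) (I y) = (inner ℝ x y : ℝ) := by
  have hII (v : V) : I (I v) = -v := by simpa using LinearMap.congr_fun hI v
  have hmem (v : V) := (mk_mem_eigenspace_iff hI v (-I v)).mpr rfl
  constructor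
  · intro hiso x y
    have := congrArg Complex.re (hiso _ (hmem x) _ (hmem y))
    simp [baseChange_inner_mk] at this
    linarith
  · intro hiso w hw w' hw'
    rw [← (mem_eigenspace_iff hI w).mp hw, ← (mem_eigenspace_iff hI w').mp hw',
      baseChange_inner_mk]
    -- the imaginary part vanishes because `I` is skew: `⟪a, I c⟫ = ⟪I a, I (I c)⟫ = -⟪I a, c⟫`
    have hskew (a c : V) : inner ℝ a (I c) = -inner ℝ (I a) c := by
      rw [← hiso a (I c), hII, inner_neg_right]
    rw [inner_neg_neg, hiso, sub_self, inner_neg_right, inner_neg_left, hskew, neg_neg,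
      add_neg_cancel]
    simp

end InnerProduct

end Complexification

open Complexification

theorem stmt1_general (n : ℕ) (V : Type*) [NormedAddCommGroup V]
    [InnerProductSpace ℝ V] [FiniteDimensional ℝ V]
    (hdim : Module.finrank ℝ V = 2 * n) :
    Set.BijOn
      (fun I : Module.End ℝ V => Module.End.eigenspace (I.baseChange ℂ) Complex.I)
      {I : Module.End ℝ V | I ∘ₗ I = -LinearMap.id ∧
        ∀ x y : V, inner ℝ (I x) (I y) = (inner ℝ x y : ℝ)}
      {W : Submodule ℂ (ℂ ⊗[ℝ] V) | Module.finrank ℂ W = n ∧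
        ∀ w ∈ W, ∀ w' ∈ W,
          (LinearMap.BilinForm.baseChange ℂ (innerₗ V)) w w' = 0} := by
  refine ⟨fun I ⟨hI, hiso⟩ => ⟨?_, (isIsotropic_eigenspace_iff hI).mpr hiso⟩,
    fun I ⟨hI, _⟩ J ⟨hJ, _⟩ h => eigenspace_injective hI hJ h, fun W ⟨hWn, hW⟩ => ?_⟩
  · have := finrank_eq_two_mul_of_bijective_re _ (re_bijective_eigenspace hI)
    dsimp only
    omega
  · have hinj := re_injective_of_isIsotropic hW
    have hsurj := (LinearMap.injective_iff_surjective_of_finrank_eq_finrank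
      (by rw [Submodule.finrank_restrictScalars_real, hWn, hdim])).mp hinj
    obtain ⟨I, hI, rfl⟩ := exists_eigenspace_eq W ⟨hinj, hsurj⟩
    exact ⟨I, ⟨hI, (isIsotropic_eigenspace_iff hI).mp hW⟩, rfl⟩

/-- `I ↦ V_I^{1,0}` (the `i`-eigenspace of the `ℂ`-linear extension of `I`)
is a bijection from the set of `g`-isometric complex structures on `V` onto the set of
`n`-dimensional isotropic complex subspaces of the complexification `V_ℂ = ℂ ⊗[ℝ] V`. -/
theorem stmt1 (n : ℕ) (hn : 1 ≤ n) (V : Type*) [NormedAddCommGroup V]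
    [InnerProductSpace ℝ V] [FiniteDimensional ℝ V]
    (hdim : Module.finrank ℝ V = 2 * n) :
    Set.BijOn
      (fun I : Module.End ℝ V => Module.End.eigenspace (I.baseChange ℂ) Complex.I)
      {I : Module.End ℝ V | I ∘ₗ I = -LinearMap.id ∧
        ∀ x y : V, inner ℝ (I x) (I y) = (inner ℝ x y : ℝ)}
      {W : Submodule ℂ (ℂ ⊗[ℝ] V) | Module.finrank ℂ W = n ∧
        ∀ w ∈ W, ∀ w' ∈ W,
          (LinearMap.BilinForm.baseChange ℂ (innerₗ V)) w w' = 0} :=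
  stmt1_general n V hdim
end

section
/- Let V be a real vector space of finite dimension m and let k be an integer with 0 < k < m. If ω is an alternating k-form on V such that ω(A v₁, …, A v_k) = ω(v₁, …, v_k) for every linear automorphism A of V with det A = 1, then ω = 0. -/
/-!
Alternating forms vanish on linearly dependent families. A linearly independent family
`v₁, …, v_k` with `k < dim V` extends to a basis with at least one further vector `w`, so the
diagonal map `vᵢ ↦ 2 vᵢ`, `w ↦ 2⁻ᵏ w` (identity on the other basis vectors) has determinant `1`;
it multiplies `ω v` by `2ᵏ ≠ 1`, hence `ω v = 0`.
-/

section

open Module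

variable {K V : Type*} [Field K] [AddCommGroup V] [Module K V]

theorem Module.Basis.sumExtend_inl {ι : Type*} {v : ι → V} (hv : LinearIndependent K v) (i : ι) :
    Basis.sumExtend hv (Sum.inl i) = v i := by
  simp [Basis.sumExtend]
  rfl

theorem LinearIndependent.exists_det_eq_one_apply_eq_smul [FiniteDimensional K V] {ι : Type*}
    [Fintype ι] {v : ι → V} (hv : LinearIndependent K v) (hcard : Fintype.card ι < finrank K V)
    (c : ι → K) (hc : ∀ i, c i ≠ 0) :
    ∃ A : V ≃ₗ[K] V, LinearMap.det (A : V →ₗ[K] V) = 1 ∧ ∀ i, A (v i) = c i • v i := by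
  classical
  set b := Basis.sumExtend hv
  have : Finite (Basis.sumExtendIndex hv) :=
    have := Module.Finite.finite_basis b
    .of_injective (Sum.inr (α := ι)) Sum.inr_injective
  have : Fintype (Basis.sumExtendIndex hv) := .ofFinite _
  obtain ⟨j⟩ : Nonempty (Basis.sumExtendIndex hv) := by
    rw [← Fintype.card_pos_iff]
    have := finrank_eq_card_basis b
    simp only [Fintype.card_sum] at this
    omega
  set d := Sum.elim c (Pi.mulSingle j (∏ i, c i)⁻¹)
  set f := Matrix.toLin b b (.diagonal d)
  have hdet : LinearMap.det f = 1 := by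
    rw [LinearMap.det_toLin, Matrix.det_diagonal, Fintype.prod_sum_type]
    simp only [d, Sum.elim_inl, Sum.elim_inr, Fintype.prod_pi_mulSingle']
    exact mul_inv_cancel₀ (Finset.prod_ne_zero_iff.2 fun i _ => hc i)
  refine ⟨f.equivOfDetNeZero (hdet ▸ one_ne_zero), hdet, fun i => ?_⟩
  simpa [b, Basis.sumExtend_inl, d] using
    (hasEigenvector_toLin_diagonal d (.inl i) b).apply_eq_smul

end

/-- an alternating `k`-form (`0 < k < m = dim V`) on a finite-dimensional
real vector space which is invariant under every automorphism of determinant `1` vanishes. -/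
theorem stmt2 (m k : ℕ) (hk : 0 < k) (hkm : k < m) (V : Type*) [AddCommGroup V]
    [Module ℝ V] [FiniteDimensional ℝ V] (hdim : Module.finrank ℝ V = m)
    (ω : V [⋀^Fin k]→ₗ[ℝ] ℝ)
    (hinv : ∀ A : V ≃ₗ[ℝ] V, LinearMap.det (A : V →ₗ[ℝ] V) = 1 →
      ∀ v : Fin k → V, ω (fun i => A (v i)) = ω v) :
    ω = 0 := by
  ext v
  by_cases hv : LinearIndependent ℝ v
  · obtain ⟨A, hA, hAv⟩ := hv.exists_det_eq_one_apply_eq_smul (by simpa [hdim])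
      (fun _ => (2 : ℝ)) fun _ => two_ne_zero
    have h := hinv A hA v
    simp only [hAv, ω.map_smul_univ, Finset.prod_const, Finset.card_univ, Fintype.card_fin,
      smul_eq_mul] at h
    have h2k : (2 : ℝ) ^ k ≠ 1 := (one_lt_pow₀ one_lt_two hk.ne').ne'
    exact (mul_left_eq_self₀.mp h).resolve_left h2k
  · exact ω.map_linearDependent v hv
end

section
/- Let V be a real vector space of dimension 2n (n ≥ 1). The subgroup of GL(V) generated by the set of all operators ρ_I(θ) = (cos θ)·id + (sin θ)·I, where I ranges over all complex structures on V and θ ranges over ℝ, is exactly SL(V) = {A ∈ GL(V) : det A = 1}. -/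
/-!
For a complex structure `J`, the map `θ ↦ det ρ_J(θ)` is a continuous homomorphism `ℝ → ℝˣ`
which is `2π`-periodic, hence trivial; so the generators lie in `SL(V)`.

Conversely, fix a basis indexed by `Fin 2 × Fin n`, i.e. `n` blocks of size `2`. Every
`A ∈ SL₂(ℝ)` is `ρ_J(θ) C` with `J` the standard complex structure and `C² = -1`, and the
block-diagonal matrix with `A` in one block and the identity in the others is a product of four
`ρ`'s of block-diagonal complex structures. Permuting the basis moves this block onto any pair of basis
vectors, which yields every transvection and every diagonal matrix of determinant one; these
generate `SL`.
-/

open Real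

theorem Real.eq_one_of_continuous_of_map_add_of_map_eq_one {f : ℝ → ℝ} (hf : Continuous f)
    (hadd : ∀ a b, f (a + b) = f a * f b) {T : ℝ} (hT : T ≠ 0) (hfT : f T = 1) (θ : ℝ) :
    f θ = 1 := by
  have hne : ∀ a, f a ≠ 0 := fun a ↦
    left_ne_zero_of_mul_eq_one (by rw [← hadd, add_sub_cancel, hfT])
  have hpos : ∀ a, 0 < f a := fun a ↦ by
    rw [← add_halves a, hadd]; exact mul_self_pos.2 (hne _)
  -- `log ∘ f` is a continuous additive map, hence linear, and it vanishes at `T ≠ 0`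
  let g : ℝ →+ ℝ :=
    { toFun := fun a ↦ log (f a)
      map_zero' := by
        rw [show f 0 = 1 from mul_right_cancel₀ (hne T) (by rw [← hadd, zero_add, hfT, one_mul]),
          log_one]
      map_add' := fun a b ↦ by simp only [hadd, log_mul (hne a) (hne b)] }
  have hg : Continuous g := continuousOn_log.comp_continuous hf fun a ↦ hne a
  have hlin : ∀ a, g a = a * g 1 := fun a ↦ by
    simpa using (g.toRealLinearMap hg).map_smul a 1
  have hg1 : g 1 = 0 := by
    have : T * g 1 = 0 := by rw [← hlin]; simp [g, hfT]
    exact (mul_eq_zero.1 this).resolve_left hT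
  have : log (f θ) = 0 := by rw [show log (f θ) = g θ from rfl, hlin, hg1, mul_zero]
  rw [← exp_log (hpos θ), this, exp_zero]

theorem Real.exists_cos_mul_add_sin_mul_eq_zero (p q : ℝ) :
    ∃ θ, cos θ * p + sin θ * q = 0 := by
  by_cases hq : q = 0
  · exact ⟨π / 2, by simp [hq]⟩
  refine ⟨arctan (-p / q), ?_⟩
  rw [← tan_mul_cos (cos_arctan_pos _).ne', tan_arctan]
  field_simp
  ring

theorem Equiv.Perm.exists_apply_eq_and_apply_eq {α : Type*} [DecidableEq α] {a b c d : α}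
    (hab : a ≠ b) (hcd : c ≠ d) : ∃ σ : Equiv.Perm α, σ a = c ∧ σ b = d := by
  set b' := Equiv.swap a c b
  have hcb' : c ≠ b' := by
    rw [← Equiv.swap_apply_left a c]; exact (Equiv.swap a c).injective.ne hab
  exact ⟨Equiv.swap b' d * Equiv.swap a c, by simp [Equiv.swap_apply_of_ne_of_ne hcb' hcd],
    Equiv.swap_apply_left b' d⟩

theorem Finset.prod_erase_mulSingle_mul_mulSingle_inv {ι M : Type*} [Fintype ι] [DecidableEq ι]
    [DivisionCommMonoid M] {D : ι → M} (hD : ∏ i, D i = 1) (j : ι) :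
    ∏ i ∈ univ.erase j, (Pi.mulSingle i (D i) * Pi.mulSingle j (D i)⁻¹) = D := by
  funext x
  rw [Finset.prod_apply]
  rcases eq_or_ne x j with rfl | hx
  · have : ∏ i ∈ univ.erase x, D i = (D x)⁻¹ :=
      eq_inv_of_mul_eq_one_right (by rwa [Finset.mul_prod_erase _ _ (Finset.mem_univ x)])
    calc ∏ i ∈ univ.erase x, (Pi.mulSingle i (D i) * Pi.mulSingle x (D i)⁻¹ : ι → M) x
        = ∏ i ∈ univ.erase x, (D i)⁻¹ := Finset.prod_congr rfl fun i hi ↦ by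
          simp [Pi.mulSingle_eq_of_ne (Finset.ne_of_mem_erase hi).symm]
      _ = D x := by rw [Finset.prod_inv_distrib, this, inv_inv]
  · simp [Pi.mulSingle_apply, hx]

namespace Matrix

theorem mul_self_eq_neg_one_of_trace_eq_zero {R : Type*} [CommRing R] [Nontrivial R]
    {C : Matrix (Fin 2) (Fin 2) R} (htr : C.trace = 0) (hdet : C.det = 1) : C * C = -1 := by
  have := C.aeval_self_charpoly
  rw [charpoly_fin_two, htr, hdet] at this
  simpa [sq, ← eq_neg_iff_add_eq_zero] using this

section BlockDiagonal

variable {m o R : Type*} [DecidableEq m] [DecidableEq o]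

variable (m o R) in
def blockDiagonalAlgHom [Fintype m] [Fintype o] [CommSemiring R] :
    (o → Matrix m m R) →ₐ[R] Matrix (m × o) (m × o) R :=
  { blockDiagonalRingHom m o R with
    commutes' := fun r ↦ by simp [Algebra.algebraMap_eq_smul_one] }

theorem blockDiagonal_mulSingle_transvection [CommRing R] (k₀ : o) (i j : m) (c : R) :
    blockDiagonal (Pi.mulSingle k₀ (transvection i j c)) = transvection (i, k₀) (j, k₀) c := by
  ext ⟨a, k⟩ ⟨b, k'⟩
  rcases eq_or_ne k k' with rfl | hkk'
  · rcases eq_or_ne k k₀ with rfl | hk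
    · simp [transvection, single, one_apply]
    · simp [transvection, single, one_apply, hk, Ne.symm hk]
  · simp only [transvection, single, blockDiagonal_apply_ne _ _ _ hkk', add_apply, one_apply,
      Prod.mk.injEq, of_apply]
    grind

theorem blockDiagonal_mulSingle_diagonal [CommSemiring R] (k₀ : o) (i j : m) (x y : R) :
    blockDiagonal (Pi.mulSingle k₀ (diagonal (Pi.mulSingle i x * Pi.mulSingle j y))) =
      diagonal (Pi.mulSingle (i, k₀) x * Pi.mulSingle (j, k₀) y : m × o → R) := by
  ext ⟨a, k⟩ ⟨b, k'⟩
  rcases eq_or_ne k k' with rfl | hkk'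
  · rcases eq_or_ne k k₀ with rfl | hk
    · simp [diagonal_apply, Pi.mulSingle_apply]
    · simp [diagonal_apply, one_apply, hk]
  · simp [blockDiagonal_apply_ne _ _ _ hkk', hkk']

end BlockDiagonal

end Matrix

namespace ComplexRotation

open Matrix

section Algebra

variable {A B : Type*} [Ring A] [Algebra ℝ A] [Ring B] [Algebra ℝ B]

noncomputable def rho (J : A) (θ : ℝ) : A := cos θ • 1 + sin θ • J

variable (A) in
def rotations : Set A := {x | ∃ J θ, J * J = -1 ∧ x = rho J θ}

variable (A) in
def rotationMonoid : Submonoid A := Submonoid.closure (rotations A)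

theorem rho_mul_rho {J : A} (hJ : J * J = -1) (a b : ℝ) :
    rho J a * rho J b = rho J (a + b) := by
  simp only [rho, add_mul, mul_add, smul_mul_smul, one_mul, mul_one, hJ, cos_add, sin_add]
  module

@[simp] theorem rho_zero (J : A) : rho J 0 = 1 := by simp [rho]

theorem rho_two_pi (J : A) : rho J (2 * π) = 1 := by simp [rho]

theorem rho_pi_div_two (J : A) : rho J (π / 2) = J := by simp [rho]

theorem rho_neg (J : A) (θ : ℝ) : rho (-J) θ = rho J (-θ) := by simp [rho]

theorem rho_apply {κ : Type*} {E : κ → Type*} [∀ k, Ring (E k)] [∀ k, Algebra ℝ (E k)]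
    (J : ∀ k, E k) (θ : ℝ) (k : κ) : rho J θ k = rho (J k) θ := rfl

theorem map_rho {F : Type*} [FunLike F A B] [AlgHomClass F ℝ A B] (f : F) (J : A) (θ : ℝ) :
    f (rho J θ) = rho (f J) θ := by
  simp [rho]

theorem map_mem_rotationMonoid {F : Type*} [FunLike F A B] [AlgHomClass F ℝ A B] (f : F) {x : A}
    (hx : x ∈ rotationMonoid A) : f x ∈ rotationMonoid B := by
  have : (rotationMonoid A).map f ≤ rotationMonoid B := by
    rw [rotationMonoid, MonoidHom.map_mclosure, Submonoid.closure_le]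
    rintro _ ⟨_, ⟨J, θ, hJ, rfl⟩, rfl⟩
    exact Submonoid.subset_closure ⟨f J, θ, by rw [← map_mul, hJ, map_neg, map_one], map_rho f J θ⟩
  exact this ⟨x, hx, rfl⟩

end Algebra

theorem det_rho {ι : Type*} [Fintype ι] [DecidableEq ι] {J : Matrix ι ι ℝ} (hJ : J * J = -1)
    (θ : ℝ) : (rho J θ).det = 1 := by
  refine Real.eq_one_of_continuous_of_map_add_of_map_eq_one (f := fun θ ↦ (rho J θ).det) ?_
    (fun a b ↦ by simp only [← rho_mul_rho hJ, det_mul]) two_pi_pos.ne' ?_ θ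
  · exact ((continuous_cos.smul continuous_const).add
      (continuous_sin.smul continuous_const)).matrix_det
  · simp [rho_two_pi]

theorem linearMap_det_rho {V : Type*} [AddCommGroup V] [Module ℝ V] [FiniteDimensional ℝ V]
    {I : Module.End ℝ V} (hI : I * I = -1) (θ : ℝ) : LinearMap.det (rho I θ) = 1 := by
  let b := Module.finBasis ℝ V
  rw [← LinearMap.det_toMatrix b]
  change (LinearMap.toMatrixAlgEquiv b (rho I θ)).det = 1
  rw [map_rho]
  exact det_rho (by rw [← map_mul, hI, map_neg, map_one]) θ

def stdJ : Matrix (Fin 2) (Fin 2) ℝ := !![0, -1; 1, 0]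

theorem stdJ_mul_self : stdJ * stdJ = -1 := by
  ext i j; fin_cases i <;> fin_cases j <;> simp [stdJ]

theorem rho_stdJ (θ : ℝ) : rho stdJ θ = !![cos θ, -sin θ; sin θ, cos θ] := by
  ext i j; fin_cases i <;> fin_cases j <;> simp [rho, stdJ]

theorem exists_eq_rho_stdJ_mul {A : Matrix (Fin 2) (Fin 2) ℝ} (hA : A.det = 1) :
    ∃ θ C, C * C = -1 ∧ A = rho stdJ θ * C := by
  obtain ⟨θ, hθ⟩ := exists_cos_mul_add_sin_mul_eq_zero (A 0 0 + A 1 1) (A 1 0 - A 0 1)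
  refine ⟨θ, rho stdJ (-θ) * A, mul_self_eq_neg_one_of_trace_eq_zero ?_ ?_, ?_⟩
  · rw [rho_stdJ, eta_fin_two A, mul_fin_two, trace_fin_two_of, cos_neg, sin_neg]
    linear_combination hθ
  · rw [det_mul, det_rho stdJ_mul_self, hA, one_mul]
  · rw [← mul_assoc, rho_mul_rho stdJ_mul_self, add_neg_cancel, rho_zero, one_mul]

theorem mulSingle_mem_rotationMonoid {κ : Type*} [DecidableEq κ] (k₀ : κ)
    {A : Matrix (Fin 2) (Fin 2) ℝ} (hA : A.det = 1) :
    Pi.mulSingle k₀ A ∈ rotationMonoid (κ → Matrix (Fin 2) (Fin 2) ℝ) := by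
  obtain ⟨θ, C, hC, rfl⟩ := exists_eq_rho_stdJ_mul hA
  let u (M : Matrix (Fin 2) (Fin 2) ℝ) : κ → Matrix (Fin 2) (Fin 2) ℝ :=
    Function.update (fun _ ↦ stdJ) k₀ M
  have hmem {M} (hM : M * M = -1) (φ : ℝ) : rho (u M) φ ∈ rotationMonoid _ := by
    refine Submonoid.subset_closure ⟨u M, φ, funext fun k ↦ ?_, rfl⟩
    by_cases hk : k = k₀
    · subst hk; simpa [u] using hM
    · simpa [u, hk] using stdJ_mul_self
  -- on the block `k₀` the last two factors cancel; on the other blocks the four angles add to `0`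
  let ψ := -(θ + π / 2) / 2
  have hprod : Pi.mulSingle k₀ (rho stdJ θ * C) =
      rho (u stdJ) θ * rho (u C) (π / 2) * (rho (u stdJ) ψ * rho (u (-stdJ)) ψ) := by
    funext k
    simp only [Pi.mul_apply, rho_apply]
    by_cases hk : k = k₀
    · subst hk
      simp [u, rho_pi_div_two, rho_neg, rho_mul_rho stdJ_mul_self]
    · simp only [u, Function.update_of_ne hk, Pi.mulSingle_eq_of_ne hk, rho_mul_rho stdJ_mul_self]
      rw [show θ + π / 2 + (ψ + ψ) = 0 by ring, rho_zero]
  rw [hprod]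
  exact mul_mem (mul_mem (hmem stdJ_mul_self θ) (hmem hC _))
    (mul_mem (hmem stdJ_mul_self ψ) (hmem (by simp [stdJ_mul_self]) ψ))

section Blocks

variable {κ : Type*} [Fintype κ] [DecidableEq κ]

theorem reindex_blockDiagonal_mulSingle_mem (σ : Equiv.Perm (Fin 2 × κ)) (k₀ : κ)
    {A : Matrix (Fin 2) (Fin 2) ℝ} (hA : A.det = 1) :
    reindexAlgEquiv ℝ ℝ σ (blockDiagonal (Pi.mulSingle k₀ A)) ∈
      rotationMonoid (Matrix (Fin 2 × κ) (Fin 2 × κ) ℝ) :=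
  map_mem_rotationMonoid _
    (map_mem_rotationMonoid (blockDiagonalAlgHom (Fin 2) κ ℝ) (mulSingle_mem_rotationMonoid k₀ hA))

variable [Nonempty κ]

theorem transvection_mem_rotationMonoid {i j : Fin 2 × κ} (hij : i ≠ j) (c : ℝ) :
    transvection i j c ∈ rotationMonoid (Matrix (Fin 2 × κ) (Fin 2 × κ) ℝ) := by
  obtain ⟨k₀⟩ := ‹Nonempty κ›
  obtain ⟨σ, rfl, rfl⟩ :=
    Equiv.Perm.exists_apply_eq_and_apply_eq (a := (0, k₀)) (b := (1, k₀)) (by simp) hij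
  have := reindex_blockDiagonal_mulSingle_mem σ k₀ (det_transvection_of_ne 0 1 (by simp) c)
  rw [blockDiagonal_mulSingle_transvection] at this
  convert this using 1
  exact TransvectionStruct.toMatrix_reindexEquiv σ ⟨(0, k₀), (1, k₀), by simp, c⟩

theorem diagonal_mulSingle_mul_mulSingle_inv_mem {i j : Fin 2 × κ} (hij : i ≠ j) {a : ℝ}
    (ha : a ≠ 0) : diagonal (Pi.mulSingle i a * Pi.mulSingle j a⁻¹) ∈
      rotationMonoid (Matrix (Fin 2 × κ) (Fin 2 × κ) ℝ) := by
  obtain ⟨k₀⟩ := ‹Nonempty κ›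
  obtain ⟨σ, rfl, rfl⟩ :=
    Equiv.Perm.exists_apply_eq_and_apply_eq (a := (0, k₀)) (b := (1, k₀)) (by simp) hij
  have := reindex_blockDiagonal_mulSingle_mem σ k₀
    (A := diagonal (Pi.mulSingle 0 a * Pi.mulSingle 1 a⁻¹)) (by simp [ha])
  simpa [blockDiagonal_mulSingle_diagonal, submatrix_diagonal_equiv, Pi.mul_comp,
    Pi.mulSingle_comp_equiv] using this

theorem diagonal_mem_rotationMonoid {D : Fin 2 × κ → ℝ} (hD : ∏ i, D i = 1) :
    diagonal D ∈ rotationMonoid (Matrix (Fin 2 × κ) (Fin 2 × κ) ℝ) := by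
  obtain ⟨j⟩ := ‹Nonempty κ›
  suffices D ∈ (rotationMonoid _).comap (diagonalRingHom (Fin 2 × κ) ℝ) from this
  rw [← Finset.prod_erase_mulSingle_mul_mulSingle_inv hD (0, j)]
  refine prod_mem fun i hi ↦ diagonal_mulSingle_mul_mulSingle_inv_mem (Finset.ne_of_mem_erase hi)
    (Finset.prod_ne_zero_iff.1 (hD ▸ one_ne_zero) i (Finset.mem_univ i))

theorem mem_rotationMonoid_of_det_eq_one {N : Matrix (Fin 2 × κ) (Fin 2 × κ) ℝ} (hN : N.det = 1) :
    N ∈ rotationMonoid (Matrix (Fin 2 × κ) (Fin 2 × κ) ℝ) :=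
  diagonal_transvection_induction (· ∈ rotationMonoid _) N
    (fun D hD ↦ diagonal_mem_rotationMonoid (by rwa [hN, det_diagonal] at hD))
    (fun t ↦ transvection_mem_rotationMonoid t.hij t.c) fun _ _ ↦ mul_mem

end Blocks

variable {V : Type*} [AddCommGroup V] [Module ℝ V]

theorem rotationMonoid_le_map_closure :
    rotationMonoid (Module.End ℝ V) ≤
      (Subgroup.closure ((↑) ⁻¹' rotations (Module.End ℝ V))).toSubmonoid.map
        LinearEquiv.automorphismGroup.toLinearMapMonoidHom := by
  refine Submonoid.closure_le.2 ?_
  rintro _ ⟨I, θ, hI, rfl⟩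
  have hinv (a b : ℝ) (hab : a + b = 0) : rho I a ∘ₗ rho I b = LinearMap.id := by
    rw [← Module.End.mul_eq_comp, rho_mul_rho hI, hab, rho_zero, Module.End.one_eq_id]
  exact ⟨.ofLinearMap _ _ (hinv θ (-θ) (add_neg_cancel θ)) (hinv (-θ) θ (neg_add_cancel θ)),
    Subgroup.subset_closure ⟨I, θ, hI, rfl⟩, rfl⟩

theorem closure_rotations_eq_ker_det [FiniteDimensional ℝ V] {κ : Type*} [Fintype κ]
    [DecidableEq κ] [Nonempty κ] (b : Module.Basis (Fin 2 × κ) ℝ V) :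
    Subgroup.closure ((↑) ⁻¹' rotations (Module.End ℝ V)) =
      (LinearEquiv.det : (V ≃ₗ[ℝ] V) →* ℝˣ).ker := by
  refine le_antisymm (Subgroup.closure_le _ |>.2 ?_) fun A hA ↦ ?_
  · rintro A ⟨I, θ, hI, hA⟩
    rw [SetLike.mem_coe, MonoidHom.mem_ker, Units.ext_iff, LinearEquiv.coe_det, hA,
      linearMap_det_rho hI, Units.val_one]
  · have hdet : (LinearMap.toMatrix b b A).det = 1 := by
      rwa [LinearMap.det_toMatrix, ← LinearEquiv.coe_det, ← Units.val_one, ← Units.ext_iff]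
    obtain ⟨E, hE, hEA⟩ := rotationMonoid_le_map_closure
      (map_mem_rotationMonoid (toLinAlgEquiv b) (mem_rotationMonoid_of_det_eq_one hdet))
    rwa [LinearEquiv.toLinearMap_injective
      (hEA.trans (toLinAlgEquiv_toMatrixAlgEquiv b A))] at hE

end ComplexRotation

/-- the subgroup of `GL(V)` generated by the operators
`ρ_I(θ) = cos θ · id + sin θ · I`, for `I` a complex structure on `V` and `θ ∈ ℝ`,
is exactly `SL(V)`, the group of automorphisms of determinant `1`. -/
theorem stmt3 (n : ℕ) (hn : 1 ≤ n) (V : Type*) [AddCommGroup V] [Module ℝ V]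
    [FiniteDimensional ℝ V] (hdim : Module.finrank ℝ V = 2 * n) :
    (Subgroup.closure {A : V ≃ₗ[ℝ] V | ∃ (I : Module.End ℝ V) (θ : ℝ),
        I ∘ₗ I = -LinearMap.id ∧
        (A : V →ₗ[ℝ] V) = Real.cos θ • LinearMap.id + Real.sin θ • I} :
      Set (V ≃ₗ[ℝ] V)) =
    {A : V ≃ₗ[ℝ] V | LinearMap.det (A : V →ₗ[ℝ] V) = 1} := by
  have : Nonempty (Fin n) := ⟨⟨0, hn⟩⟩
  have h := ComplexRotation.closure_rotations_eq_ker_det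
    ((Module.finBasisOfFinrankEq ℝ V hdim).reindex finProdFinEquiv.symm)
  change (Subgroup.closure (((↑) : (V ≃ₗ[ℝ] V) → Module.End ℝ V) ⁻¹'
    ComplexRotation.rotations _) : Set (V ≃ₗ[ℝ] V)) = _
  ext A
  simp [h, Units.ext_iff, LinearEquiv.coe_det]
end

section
/- Let V be a real vector space of dimension 2n (n ≥ 1) and let p be an integer with 0 < p < n. Suppose ω is an element of the 2p-th exterior power Λ^{2p} V such that (Λ^{2p} ρ_I(θ))(ω) = ω for every complex structure I on V and every θ ∈ ℝ, where Λ^{2p} ρ_I(θ) denotes the induced map on Λ^{2p} V (acting by A(v₁ ∧ … ∧ v_{2p}) = A v₁ ∧ … ∧ A v_{2p}). Then ω = 0. -/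
/-!
Since `ρ_I(π/2) = I`, the form `ω` is fixed by every complex structure, hence by every product
of two of them. Pair the vectors of a basis into planes so that two given basis vectors `b a`,
`b c` span one plane. The quarter turn `J₁` on every plane and its variant `J_t`, rescaled by
`t` on the plane of `b a`, `b c`, are complex structures, and `J_t ∘ (-J₁)` is diagonal: it
multiplies `b a` and `b c` by `t` and `t⁻¹` (in some order) and fixes the other basis vectors.
On `⋀^{2p} V` it therefore multiplies the coordinate of `ω` at every `2p`-subset `s` with
`a ∈ s`, `c ∉ s` by `t^{±1} ≠ 1`, so that coordinate vanishes. As `0 < 2p < 2n`, every `s`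
admits such `a` and `c`.
-/

open Module Set.powersetCard

namespace exteriorPower

variable {R M N : Type*} [CommRing R] [AddCommGroup M] [Module R M] [AddCommGroup N] [Module R N]
  {k : ℕ} {I : Type*} [LinearOrder I]

lemma coe_map_apply (f : M →ₗ[R] N) (x : ⋀[R]^k M) :
    (map k f x : ExteriorAlgebra R N) = ExteriorAlgebra.map f x := by
  have : (⋀[R]^k N).subtype ∘ₗ map k f =
      (ExteriorAlgebra.map f).toLinearMap ∘ₗ (⋀[R]^k M).subtype := by
    ext v
    simp
  exact congr($this x)

lemma map_basis_of_apply_eq_smul (b : Basis I R M) {D : M →ₗ[R] M} {d : I → R}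
    (hD : ∀ i, D (b i) = d i • b i) (s : Set.powersetCard I k) :
    map k D (b.exteriorPower k s) = (∏ i ∈ s.val, d i) • b.exteriorPower k s := by
  rw [basis_apply, map_apply_ιMulti_family, ιMulti_family, ιMulti_family]
  have hDb : (D ∘ b) ∘ ofFinEmbEquiv.symm s =
      fun j => d (ofFinEmbEquiv.symm s j) • (b ∘ ofFinEmbEquiv.symm s) j := by
    funext j
    simp [hD]
  rw [hDb, AlternatingMap.map_smul_univ]
  congr 1
  rw [ofFinEmbEquiv_symm_apply]
  exact (Fintype.prod_equiv (s.val.orderIsoOfFin s.prop).toEquiv _ _ fun j => rfl).trans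
    (s.val.prod_coe_sort d)

lemma basis_repr_map_of_apply_eq_smul (b : Basis I R M) {D : M →ₗ[R] M} {d : I → R}
    (hD : ∀ i, D (b i) = d i • b i) (x : ⋀[R]^k M) (s : Set.powersetCard I k) :
    (b.exteriorPower k).repr (map k D x) s =
      (∏ i ∈ s.val, d i) * (b.exteriorPower k).repr x s := by
  have hcoord : (b.exteriorPower k).coord s ∘ₗ map k D =
      (∏ i ∈ s.val, d i) • (b.exteriorPower k).coord s := by
    refine (b.exteriorPower k).ext fun t => ?_
    simp only [LinearMap.comp_apply, LinearMap.smul_apply, map_basis_of_apply_eq_smul b hD,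
      map_smul, Basis.coord_apply, Basis.repr_self, smul_eq_mul]
    by_cases hts : t = s
    · rw [hts]
    · rw [Finsupp.single_apply, if_neg hts, mul_zero, mul_zero]
  exact congr($hcoord x)

lemma basis_repr_eq_zero_of_map_eq_self [NoZeroDivisors R] (b : Basis I R M) {D : M →ₗ[R] M}
    {d : I → R} (hD : ∀ i, D (b i) = d i • b i) {x : ⋀[R]^k M} (hx : map k D x = x)
    {s : Set.powersetCard I k} (hs : ∏ i ∈ s.val, d i ≠ 1) :
    (b.exteriorPower k).repr x s = 0 := by
  have h := basis_repr_map_of_apply_eq_smul b hD x s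
  rw [hx] at h
  have hzero : ((∏ i ∈ s.val, d i) - 1) * (b.exteriorPower k).repr x s = 0 := by
    rw [sub_mul, ← h, one_mul, sub_self]
  exact (mul_eq_zero.mp hzero).resolve_left (sub_ne_zero.mpr hs)

end exteriorPower

lemma Fintype.exists_equiv_prod_bool_of_ne {ι : Type*} [Fintype ι] {n : ℕ}
    (hι : Fintype.card ι = 2 * n) {a c : ι} (hac : a ≠ c) :
    ∃ e : ι ≃ Fin n × Bool, e c = ((e a).1, !(e a).2) := by
  let e₀ : ι ≃ Fin n × Bool := Fintype.equivOfCardEq (by simp [hι, mul_comm])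
  refine ⟨e₀.trans (Equiv.swap ((e₀ a).1, !(e₀ a).2) (e₀ c)), ?_⟩
  have hpartner : e₀ a ≠ ((e₀ a).1, !(e₀ a).2) := by simp [Prod.ext_iff]
  simp [Equiv.swap_apply_of_ne_of_ne hpartner (e₀.injective.ne hac)]

section ComplexStructure

variable {K V : Type*} [Field K] [AddCommGroup V] [Module K V]

namespace Module.Basis

variable {κ : Type*} (b : Basis (κ × Bool) K V)

noncomputable def pairedComplexStructure (t : κ → K) : Module.End K V :=
  b.constr K fun x => if x.2 then -(t x.1)⁻¹ • b (x.1, false) else t x.1 • b (x.1, true)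

lemma pairedComplexStructure_comp_self {t : κ → K} (ht : ∀ k, t k ≠ 0) :
    b.pairedComplexStructure t ∘ₗ b.pairedComplexStructure t = -LinearMap.id :=
  b.ext fun ⟨k, β⟩ => by cases β <;> simp [pairedComplexStructure, ht]

lemma pairedComplexStructure_comp_neg_one_apply (t : κ → K) (x : κ × Bool) :
    (b.pairedComplexStructure t ∘ₗ (-b.pairedComplexStructure 1)) (b x) =
      (if x.2 then t x.1 else (t x.1)⁻¹) • b x := by
  obtain ⟨k, β⟩ := x
  cases β <;> simp [pairedComplexStructure]

end Module.Basis

lemma ExteriorAlgebra.exists_diagonal_map_eq_self {ι : Type*} [Fintype ι] {n : ℕ}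
    (hι : Fintype.card ι = 2 * n) (b : Basis ι K V) {ω : ExteriorAlgebra K V}
    (hfix : ∀ I : Module.End K V, I ∘ₗ I = -LinearMap.id → ExteriorAlgebra.map I ω = ω)
    {t : K} (ht₀ : t ≠ 0) (ht₁ : t ≠ 1) {a c : ι} (hac : a ≠ c) :
    ∃ (D : Module.End K V) (d : ι → K), (∀ i, D (b i) = d i • b i) ∧ d a ≠ 1 ∧
      (∀ i, i ≠ a → i ≠ c → d i = 1) ∧ ExteriorAlgebra.map D ω = ω := by
  obtain ⟨e, he⟩ := Fintype.exists_equiv_prod_bool_of_ne hι hac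
  let b' := b.reindex e
  let s : Fin n → K := fun k => if k = (e a).1 then t else 1
  have hs : ∀ k, s k ≠ 0 := fun k => by by_cases hk : k = (e a).1 <;> simp [s, hk, ht₀]
  refine ⟨b'.pairedComplexStructure s ∘ₗ (-b'.pairedComplexStructure 1),
    fun i => if (e i).2 then s (e i).1 else (s (e i).1)⁻¹, fun i => ?_, ?_,
    fun i hia hic => ?_, ?_⟩
  · simpa [b'] using b'.pairedComplexStructure_comp_neg_one_apply s (e i)
  · simp only [s, if_pos rfl]
    split_ifs <;> simp [ht₁]
  · have hplane : (e i).1 ≠ (e a).1 := by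
      intro h
      obtain hβ | hβ : (e i).2 = (e a).2 ∨ (e i).2 = !(e a).2 := by
        cases (e i).2 <;> cases (e a).2 <;> simp
      · exact hia (e.injective (Prod.ext h hβ))
      · exact hic (e.injective (he ▸ Prod.ext h hβ))
    simp [s, hplane]
  · have hJ₁ := b'.pairedComplexStructure_comp_self (t := 1) fun _ => one_ne_zero
    rw [← ExteriorAlgebra.map_comp_map, AlgHom.comp_apply,
      hfix _ (by rw [LinearMap.neg_comp, LinearMap.comp_neg, neg_neg, hJ₁]),
      hfix _ (b'.pairedComplexStructure_comp_self hs)]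

end ComplexStructure

theorem stmt4_general (n p : ℕ) (hp : 0 < p) (hpn : p < n) (V : Type*)
    [AddCommGroup V] [Module ℝ V] [FiniteDimensional ℝ V]
    (hdim : Module.finrank ℝ V = 2 * n)
    (ω : ExteriorAlgebra ℝ V) (hω : ω ∈ ⋀[ℝ]^(2 * p) V)
    (hinv : ∀ (I : Module.End ℝ V) (θ : ℝ), I ∘ₗ I = -LinearMap.id →
      ExteriorAlgebra.map (Real.cos θ • LinearMap.id + Real.sin θ • I) ω = ω) :
    ω = 0 := by
  have hfix : ∀ I : Module.End ℝ V, I ∘ₗ I = -LinearMap.id → ExteriorAlgebra.map I ω = ω :=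
    fun I hI => by simpa using hinv I (Real.pi / 2) hI
  let b := Module.finBasisOfFinrankEq ℝ V hdim
  suffices (⟨ω, hω⟩ : ⋀[ℝ]^(2 * p) V) = 0 from congrArg Subtype.val this
  refine (b.exteriorPower (2 * p)).ext_elem fun s => ?_
  obtain ⟨a, ha⟩ : s.val.Nonempty := Finset.card_pos.mp (by rw [s.prop]; omega)
  obtain ⟨c, -, hc⟩ := Finset.exists_mem_notMem_of_card_lt_card (s := s.val)
    (t := Finset.univ) (by simp; omega)
  obtain ⟨D, d, hD, hda, hd, hDω⟩ := ExteriorAlgebra.exists_diagonal_map_eq_self (n := n)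
    (by simp) b hfix two_ne_zero (by norm_num) (ne_of_mem_of_not_mem ha hc)
  rw [map_zero, Finsupp.zero_apply]
  refine exteriorPower.basis_repr_eq_zero_of_map_eq_self b hD
    (Subtype.ext ((exteriorPower.coe_map_apply D _).trans hDω)) ?_
  rwa [Finset.prod_eq_single_of_mem a ha fun i hi hia => hd i hia (ne_of_mem_of_not_mem hi hc)]

/-- an element of the `2p`-th exterior power of a `2n`-dimensional real
vector space (`0 < p < n`) invariant under all induced maps `Λ^{2p} ρ_I(θ)`, where
`ρ_I(θ) = cos θ · id + sin θ · I` and `I` ranges over complex structures on `V`, is zero.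
Here the induced action on the exterior power is the restriction of the functorial algebra
map `ExteriorAlgebra.map`, which acts by `v₁ ∧ … ∧ v_{2p} ↦ A v₁ ∧ … ∧ A v_{2p}`. -/
theorem stmt4 (n p : ℕ) (hn : 1 ≤ n) (hp : 0 < p) (hpn : p < n) (V : Type*)
    [AddCommGroup V] [Module ℝ V] [FiniteDimensional ℝ V]
    (hdim : Module.finrank ℝ V = 2 * n)
    (ω : ExteriorAlgebra ℝ V) (hω : ω ∈ ⋀[ℝ]^(2 * p) V)
    (hinv : ∀ (I : Module.End ℝ V) (θ : ℝ), I ∘ₗ I = -LinearMap.id →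
      ExteriorAlgebra.map (Real.cos θ • LinearMap.id + Real.sin θ • I) ω = ω) :
    ω = 0 :=
  stmt4_general n p hp hpn V hdim ω hω hinv
end

section
/- Let (V, g) be a real inner product space of dimension at least 3. If B : V × V → ℝ is an alternating bilinear form such that B(A v, A w) = B(v, w) for every g-isometry A of V with det A = 1 (i.e. every A ∈ SO(V, g)), then B = 0. -/
/-!
For `v ⊥ w`, dimension at least 3 provides a unit direction `u ⊥ v, w`, and the rotation by `π`
in the plane of `w` and `u` (the product of the reflections in `wᗮ` and `uᗮ`) lies in `SO(V)`,
fixes `v` and negates `w`; invariance gives `B v w = -B v w`. A general `w` is a multiple of `v`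
plus a vector orthogonal to `v`, and `B v v = 0` disposes of the first part.
-/

open Module Submodule

section

variable {V : Type*} [NormedAddCommGroup V] [InnerProductSpace ℝ V]

def IsRotationInvariant (B : V →ₗ[ℝ] V →ₗ[ℝ] ℝ) : Prop :=
  ∀ A : V ≃ₗᵢ[ℝ] V, LinearMap.det A.toLinearMap = 1 → ∀ v w, B (A v) (A w) = B v w

variable [FiniteDimensional ℝ V]

lemma det_reflection_orthogonal_singleton {u : V} (hu : u ≠ 0) :
    LinearMap.det (ℝ ∙ u)ᗮ.reflection.toLinearMap = -1 := by
  rw [det_reflection, orthogonal_orthogonal, finrank_span_singleton hu, pow_one]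

lemma exists_ne_zero_inner_eq_zero_of_three_le_finrank (hdim : 3 ≤ finrank ℝ V) (v w : V) :
    ∃ u : V, u ≠ 0 ∧ inner ℝ v u = 0 ∧ inner ℝ w u = 0 := by
  set K := span ℝ (Set.range ![v, w])
  have hK : finrank ℝ K ≤ 2 := (finrank_range_le_card _).trans (by simp)
  have hKperp : Kᗮ ≠ ⊥ := by
    intro h
    have := K.finrank_add_finrank_orthogonal
    rw [h, finrank_bot] at this
    omega
  obtain ⟨u, hu, hu0⟩ := exists_mem_ne_zero_of_ne_bot hKperp
  exact ⟨u, hu0, hu v (subset_span ⟨0, rfl⟩), hu w (subset_span ⟨1, rfl⟩)⟩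

lemma IsRotationInvariant.apply_eq_zero_of_inner_eq_zero {B : V →ₗ[ℝ] V →ₗ[ℝ] ℝ}
    (hB : IsRotationInvariant B) (hdim : 3 ≤ finrank ℝ V) {v w : V} (hvw : inner ℝ v w = 0) :
    B v w = 0 := by
  rcases eq_or_ne w 0 with rfl | hw
  · simp
  obtain ⟨u, hu, hvu, hwu⟩ := exists_ne_zero_inner_eq_zero_of_three_le_finrank hdim v w
  set A := (ℝ ∙ w)ᗮ.reflection.trans (ℝ ∙ u)ᗮ.reflection
  have hdet : LinearMap.det A.toLinearMap = 1 := by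
    change LinearMap.det ((ℝ ∙ u)ᗮ.reflection.toLinearMap ∘ₗ (ℝ ∙ w)ᗮ.reflection.toLinearMap) = 1
    rw [LinearMap.det_comp, det_reflection_orthogonal_singleton hu,
      det_reflection_orthogonal_singleton hw]
    norm_num
  have hAv : A v = v := by
    change (ℝ ∙ u)ᗮ.reflection ((ℝ ∙ w)ᗮ.reflection v) = v
    rw [reflection_mem_subspace_eq_self (mem_orthogonal_singleton_iff_inner_left.mpr hvw),
      reflection_mem_subspace_eq_self (mem_orthogonal_singleton_iff_inner_left.mpr hvu)]
  have hAw : A w = -w := by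
    change (ℝ ∙ u)ᗮ.reflection ((ℝ ∙ w)ᗮ.reflection w) = -w
    rw [reflection_orthogonalComplement_singleton_eq_neg, map_neg,
      reflection_mem_subspace_eq_self (mem_orthogonal_singleton_iff_inner_left.mpr hwu)]
  have h := hB A hdet v w
  rw [hAv, hAw, map_neg] at h
  linarith

end

/-- an alternating bilinear form on a real inner product space of dimension
at least 3 which is invariant under every special orthogonal transformation vanishes. -/
theorem stmt5 (V : Type*) [NormedAddCommGroup V] [InnerProductSpace ℝ V]
    [FiniteDimensional ℝ V] (hdim : 3 ≤ Module.finrank ℝ V)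
    (B : V →ₗ[ℝ] V →ₗ[ℝ] ℝ) (halt : ∀ v : V, B v v = 0)
    (hinv : ∀ A : V ≃ₗ[ℝ] V,
      (∀ x y : V, inner ℝ (A x) (A y) = (inner ℝ x y : ℝ)) →
      LinearMap.det (A : V →ₗ[ℝ] V) = 1 →
      ∀ v w : V, B (A v) (A w) = B v w) :
    B = 0 := by
  have hB : IsRotationInvariant B := fun A => hinv A.toLinearEquiv A.inner_map_map
  ext v w
  obtain ⟨c, hc⟩ := mem_span_singleton.mp ((ℝ ∙ v).starProjection_apply_mem w)
  have hw : w = c • v + (w - (ℝ ∙ v).starProjection w) := by rw [hc, add_sub_cancel]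
  have hperp : inner ℝ v (w - (ℝ ∙ v).starProjection w) = 0 :=
    mem_orthogonal_singleton_iff_inner_right.mp ((ℝ ∙ v).sub_starProjection_mem_orthogonal w)
  rw [hw, map_add, map_smul, halt, hB.apply_eq_zero_of_inner_eq_zero hdim hperp]
  simp
end

section
/- Let V be a real vector space of dimension 2n (n ≥ 1), let g and g₁ be two inner products on V, and let A be the unique linear endomorphism of V with g₁(x, y) = g(A x, y) for all x, y ∈ V (so A is g-self-adjoint and positive definite). Then the following are equivalent: (i) there exists a complex structure I on V that is simultaneously a g-isometry and a g₁-isometry; (ii) for every real number c, the dimension of the eigenspace ker(A − c·id) is even. -/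
/-- let `g`, `g₁` be two inner products (positive-definite symmetric bilinear
forms) on a real vector space of dimension `2n`, and let `A` be the endomorphism with
`g₁(x, y) = g(A x, y)`.  Then there is a complex structure which is simultaneously a
`g`-isometry and a `g₁`-isometry iff every eigenspace of `A` is even-dimensional. -/
theorem stmt7 (n : ℕ) (hn : 1 ≤ n) (V : Type*) [AddCommGroup V] [Module ℝ V]
    [FiniteDimensional ℝ V] (hdim : Module.finrank ℝ V = 2 * n)
    (g g₁ : V →ₗ[ℝ] V →ₗ[ℝ] ℝ)
    (hgsymm : ∀ x y : V, g x y = g y x) (hgpos : ∀ x : V, x ≠ 0 → 0 < g x x)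
    (hg₁symm : ∀ x y : V, g₁ x y = g₁ y x) (hg₁pos : ∀ x : V, x ≠ 0 → 0 < g₁ x x)
    (A : Module.End ℝ V) (hA : ∀ x y : V, g₁ x y = g (A x) y) :
    (∃ I : Module.End ℝ V, I ∘ₗ I = -LinearMap.id ∧
      (∀ x y : V, g (I x) (I y) = g x y) ∧
      (∀ x y : V, g₁ (I x) (I y) = g₁ x y)) ↔
    (∀ c : ℝ, Even (Module.finrank ℝ
      (LinearMap.ker (A - c • (LinearMap.id : Module.End ℝ V))))) := by
  classical
  have hgnd : ∀ u w : V, (∀ z : V, g u z = g w z) → u = w := by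
    intro u w h
    by_contra hne
    have h0 : g (u - w) (u - w) = 0 := by
      have h1 := h (u - w)
      simp only [map_sub, LinearMap.sub_apply] at h1 ⊢
      linarith
    exact (hgpos (u - w) (sub_ne_zero.mpr hne)).ne' h0
  constructor
  · rintro ⟨I, hI2, hIg, hIg₁⟩ c
    have hII : ∀ z : V, I (I z) = -z := by
      intro z
      have := congrArg (fun f : V →ₗ[ℝ] V => f z) hI2
      simpa using this
    have hsurj : ∀ z : V, I (-(I z)) = z := by
      intro z
      rw [map_neg, hII, neg_neg]
    have hcomm : ∀ x : V, A (I x) = I (A x) := by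
      intro x
      apply hgnd
      intro z
      calc g (A (I x)) z = g (A (I x)) (I (-(I z))) := by rw [hsurj]
        _ = g₁ (I x) (I (-(I z))) := (hA _ _).symm
        _ = g₁ x (-(I z)) := hIg₁ _ _
        _ = g (A x) (-(I z)) := hA _ _
        _ = g (I (A x)) (I (-(I z))) := (hIg _ _).symm
        _ = g (I (A x)) z := by rw [hsurj]
    set K := LinearMap.ker (A - c • (LinearMap.id : Module.End ℝ V)) with hK
    have hmemK : ∀ x : V, x ∈ K ↔ A x = c • x := by
      intro x
      simp [hK, LinearMap.mem_ker, LinearMap.sub_apply, sub_eq_zero]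
    have hinv : ∀ x ∈ K, I x ∈ K := by
      intro x hx
      rw [hmemK] at hx ⊢
      rw [hcomm, hx, map_smul]
    set J := I.restrict hinv with hJ
    have hJ2 : J ∘ₗ J = -(LinearMap.id : Module.End ℝ K) := by
      ext x
      have h1 : (((J ∘ₗ J) x : K) : V) = I (I (x : V)) := rfl
      rw [h1, hII]
      simp
    have hd : LinearMap.det J * LinearMap.det J = (-1 : ℝ) ^ (Module.finrank ℝ K) := by
      rw [← LinearMap.det_comp, hJ2]
      have h1 : (-(LinearMap.id : Module.End ℝ K)) = (-1 : ℝ) • LinearMap.id :=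
        (neg_one_smul ℝ (LinearMap.id : Module.End ℝ K)).symm
      rw [h1, LinearMap.det_smul, LinearMap.det_id, mul_one]
    by_contra hodd
    rw [Nat.not_even_iff_odd] at hodd
    rw [hodd.neg_one_pow] at hd
    nlinarith [mul_self_nonneg (LinearMap.det J)]
  · intro heven
    letI core : InnerProductSpace.Core ℝ V :=
      { inner := fun x y => g x y
        conj_inner_symm := fun x y => by simpa using hgsymm y x
        re_inner_nonneg := fun x => by
          rcases eq_or_ne x 0 with h | h
          · subst h; simp
          · simpa using (hgpos x h).le
        add_left := fun x y z => by simp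
        smul_left := fun x y r => by simp
        definite := fun x hx => by
          by_contra h
          exact (hgpos x h).ne' hx }
    letI : NormedAddCommGroup V := core.toNormedAddCommGroup
    letI : InnerProductSpace ℝ V := InnerProductSpace.ofCore core.toCore
    have inner_eq : ∀ x y : V, (inner ℝ x y : ℝ) = g x y := fun _ _ => rfl
    have hsym : A.IsSymmetric := by
      intro x y
      rw [inner_eq, inner_eq]
      calc g (A x) y = g₁ x y := (hA x y).symm
        _ = g₁ y x := hg₁symm x y
        _ = g (A y) x := hA y x
        _ = g x (A y) := hgsymm _ _
    have hker : ∀ c : ℝ, Module.End.eigenspace A c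
        = LinearMap.ker (A - c • (LinearMap.id : Module.End ℝ V)) := by
      intro c
      ext x
      simp [Module.End.mem_eigenspace_iff, LinearMap.mem_ker, LinearMap.sub_apply,
        sub_eq_zero]
    have heven' : ∀ μ : ℝ, Even (Module.finrank ℝ (Module.End.eigenspace A μ)) := by
      intro μ
      rw [hker μ]
      exact heven μ
    -- choose halved dimensions
    set m : Module.End.Eigenvalues A → ℕ :=
      fun μ => (heven' (μ : ℝ)).choose with hm
    have hmspec : ∀ μ : Module.End.Eigenvalues A,
        Module.finrank ℝ (Module.End.eigenspace A (μ : ℝ)) = m μ + m μ :=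
      fun μ => (heven' (μ : ℝ)).choose_spec
    set bas : ∀ μ : Module.End.Eigenvalues A,
        OrthonormalBasis (Fin (m μ) ⊕ Fin (m μ)) ℝ (Module.End.eigenspace A (μ : ℝ)) :=
      fun μ => (stdOrthonormalBasis ℝ (Module.End.eigenspace A (μ : ℝ))).reindex
        ((finCongr (hmspec μ)).trans finSumFinEquiv.symm) with hbas
    set b : OrthonormalBasis
        (Σ μ : Module.End.Eigenvalues A, (Fin (m μ) ⊕ Fin (m μ))) ℝ V :=
      DirectSum.IsInternal.collectedOrthonormalBasis
        hsym.orthogonalFamily_eigenspaces' hsym.direct_sum_isInternal bas with hb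
    have hmem : ∀ i, (b i : V) ∈ Module.End.eigenspace A ((i.1 : ℝ)) := fun i =>
      DirectSum.IsInternal.collectedOrthonormalBasis_mem hsym.direct_sum_isInternal
        hsym.orthogonalFamily_eigenspaces' bas i
    have hAb : ∀ i, A (b i) = (i.1 : ℝ) • b i := fun i =>
      Module.End.mem_eigenspace_iff.mp (hmem i)
    set σ : (Σ μ : Module.End.Eigenvalues A, (Fin (m μ) ⊕ Fin (m μ))) →
        (Σ μ : Module.End.Eigenvalues A, (Fin (m μ) ⊕ Fin (m μ))) :=
      fun i => ⟨i.1, i.2.swap⟩ with hσ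
    set ε : (Σ μ : Module.End.Eigenvalues A, (Fin (m μ) ⊕ Fin (m μ))) → ℝ :=
      fun i => Sum.elim (fun _ => (1 : ℝ)) (fun _ => (-1 : ℝ)) i.2 with hε
    have hσσ : ∀ i, σ (σ i) = i := by
      rintro ⟨μ, s⟩
      simp [hσ, Sum.swap_swap]
    have hσinj : Function.Injective σ := by
      intro a c h
      rw [← hσσ a, h, hσσ]
    have hεσ : ∀ i, ε i * ε (σ i) = -1 := by
      rintro ⟨μ, s⟩
      cases s <;> simp [hσ, hε]
    have hεsq : ∀ i, ε i * ε i = 1 := by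
      rintro ⟨μ, s⟩
      cases s <;> simp [hε]
    set I : Module.End ℝ V := b.toBasis.constr ℝ (fun i => ε i • b (σ i)) with hI
    have hIb : ∀ i, I (b i) = ε i • b (σ i) := by
      intro i
      have := b.toBasis.constr_basis ℝ (fun i => ε i • b (σ i)) i
      rwa [OrthonormalBasis.coe_toBasis] at this
    have hgb : ∀ k l, g (b k) (b l) = if k = l then 1 else 0 := by
      intro k l
      have h1 := orthonormal_iff_ite.mp b.orthonormal k l
      rw [inner_eq] at h1
      simpa using h1
    have hI2 : I ∘ₗ I = -LinearMap.id := by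
      apply b.toBasis.ext
      intro i
      rw [OrthonormalBasis.coe_toBasis, LinearMap.comp_apply, hIb, map_smul, hIb,
        smul_smul, hσσ, hεσ]
      simp
    have hgiso : ∀ x y : V, g (I x) (I y) = g x y := by
      have hB : g.compl₁₂ I I = g := by
        apply LinearMap.ext_basis b.toBasis b.toBasis
        intro i j
        simp only [LinearMap.compl₁₂_apply, OrthonormalBasis.coe_toBasis, hIb,
          map_smul, LinearMap.smul_apply, smul_eq_mul, hgb]
        rcases eq_or_ne i j with h | h
        · subst h
          simp only [eq_self_iff_true, if_true, mul_one]
          linear_combination hεsq i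
        · rw [if_neg h, if_neg (fun hc => h (hσinj hc))]
          ring
      intro x y
      have := congrArg (fun B : V →ₗ[ℝ] V →ₗ[ℝ] ℝ => B x y) hB
      simpa [LinearMap.compl₁₂_apply] using this
    refine ⟨I, hI2, hgiso, ?_⟩
    have hcomm : ∀ x : V, A (I x) = I (A x) := by
      have h : A ∘ₗ I = I ∘ₗ A := by
        apply b.toBasis.ext
        intro i
        rw [OrthonormalBasis.coe_toBasis, LinearMap.comp_apply, LinearMap.comp_apply,
          hIb, map_smul, hAb, hAb, map_smul, hIb]
        have h1 : ((σ i).1 : ℝ) = (i.1 : ℝ) := rfl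
        rw [h1, smul_smul, smul_smul, mul_comm]
      intro x
      exact congrArg (fun f : V →ₗ[ℝ] V => f x) h
    intro x y
    rw [hA, hA, hcomm, hgiso]
end

section
/- Let n ≥ 1 and let L be a ℤ-submodule of ℤ^{2n} of rank r. Then there exists an ℝ-linear isomorphism φ : ℝ^{2n} → ℂ^n such that the ℂ-linear span of φ(L) (the image under φ of L viewed inside ℝ^{2n} via the canonical inclusion ℤ^{2n} ⊆ ℝ^{2n}) has complex dimension min(r, n). -/
/-!
Write `V` for the real span of `L` in `ℝ^{2n}`. An integral basis of `L` stays linearly independent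
over `ℝ`, so `dim_ℝ V = r`. On the other side, with `a = min r n` we have `a ≤ r ≤ 2a`, so a real
subspace `U ⊆ ℂ^n` of dimension `r` can be squeezed between the real span of `a` vectors of a
complex basis and their complex span `W`; then `span_ℂ U = W` has complex dimension `a`. Any real
isomorphism `ℝ^{2n} ≃ ℂ^n` carrying `V` onto `U` does the job.
-/

open Module Submodule

section Lattice

variable {R S ι : Type*} [CommRing R] [IsDomain R] [IsPrincipalIdealRing R]
  [CommRing S] [IsDomain S] [Algebra R S] [FaithfulSMul R S] [Finite ι]

theorem Submodule.finrank_span_image_piAlgebraMap (L : Submodule R (ι → R)) :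
    finrank S (span S (Pi.algebraMap ι R S '' L)) = finrank R L := by
  let b := Module.finBasis R L
  let v : Fin (finrank R L) → ι → R := fun i => b i
  have hv : LinearIndependent R v := b.linearIndependent.map' L.subtype L.ker_subtype
  have hLv : span R (Set.range v) = L := by
    rw [show v = L.subtype ∘ b from rfl, Set.range_comp, ← map_span, b.span_eq, map_top,
      range_subtype]
  have hspan :
      span S (Pi.algebraMap ι R S '' L) = span S (Set.range (Pi.algebraMap ι R S ∘ v)) := by
    conv_lhs => rw [← hLv]
    rw [← map_coe, ← span_image, span_span_of_tower, Set.range_comp]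
  have hvS : LinearIndependent S (Pi.algebraMap ι R S ∘ v) :=
    linearIndependent_algebraMap_comp_iff.2 hv
  rw [hspan, finrank_span_eq_card hvS, Fintype.card_fin]

end Lattice

section Subspaces

variable {K : Type*} [DivisionRing K]

theorem Submodule.exists_le_le_finrank_eq {V : Type*} [AddCommGroup V] [Module K V]
    [FiniteDimensional K V] {p q : Submodule K V} (hpq : p ≤ q) {k : ℕ}
    (hpk : finrank K p ≤ k) (hkq : k ≤ finrank K q) :
    ∃ U : Submodule K V, p ≤ U ∧ U ≤ q ∧ finrank K U = k := by
  induction k, hpk using Nat.le_induction with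
  | base => exact ⟨p, le_rfl, hpq, rfl⟩
  | succ k _ ih =>
    obtain ⟨U, hpU, hUq, hU⟩ := ih (by omega)
    have hUlt : U < q := lt_of_le_of_ne hUq (by rintro rfl; omega)
    obtain ⟨x, hxq, hxU⟩ := SetLike.exists_of_lt hUlt
    refine ⟨U ⊔ span K {x}, le_sup_of_le_left hpU,
      sup_le hUq ((span_singleton_le_iff_mem x q).2 hxq), ?_⟩
    rw [finrank_sup_span_singleton hxU, hU]

theorem Submodule.exists_linearEquiv_map_eq {M N : Type*} [AddCommGroup M] [Module K M]
    [FiniteDimensional K M] [AddCommGroup N] [Module K N] [FiniteDimensional K N]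
    (hMN : finrank K M = finrank K N) {p : Submodule K M} {q : Submodule K N}
    (hpq : finrank K p = finrank K q) :
    ∃ e : M ≃ₗ[K] N, p.map (e : M →ₗ[K] N) = q := by
  obtain ⟨p', hp⟩ := p.exists_isCompl
  obtain ⟨q', hq⟩ := q.exists_isCompl
  have hpq' : finrank K p' = finrank K q' := by
    have := finrank_add_eq_of_isCompl hp
    have := finrank_add_eq_of_isCompl hq
    omega
  let e : M ≃ₗ[K] N := (prodEquivOfIsCompl p p' hp).symm ≪≫ₗ
    (LinearEquiv.ofFinrankEq p q hpq).prodCongr (LinearEquiv.ofFinrankEq p' q' hpq') ≪≫ₗ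
    prodEquivOfIsCompl q q' hq
  refine ⟨e, eq_of_le_of_finrank_eq ?_ ((e.finrank_map_eq p).trans hpq)⟩
  rintro _ ⟨x, hx, rfl⟩
  have hex : e x = LinearEquiv.ofFinrankEq p q hpq (⟨x, hx⟩ : p) := by
    simp [e, prodEquivOfIsCompl_symm_apply_left p p' hp (⟨x, hx⟩ : p)]
  rw [LinearEquiv.coe_coe, hex]
  exact SetLike.coe_mem _

end Subspaces

theorem Submodule.exists_finrank_eq_finrank_span_eq {K F E : Type*} [Field K] [Field F]
    [Algebra K F] [FiniteDimensional K F] [AddCommGroup E] [Module F E] [Module K E]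
    [IsScalarTower K F E] [FiniteDimensional F E] {a k : ℕ} (ha : a ≤ finrank F E)
    (hak : a ≤ k) (hka : k ≤ finrank K F * a) :
    ∃ U : Submodule K E, finrank K U = k ∧ finrank F (span F (U : Set E)) = a := by
  have : FiniteDimensional K E := Module.Finite.trans F E
  let c : Fin a → E := Module.finBasis F E ∘ Fin.castLE ha
  have hcF : LinearIndependent F c :=
    (Module.finBasis F E).linearIndependent.comp _ (Fin.castLE_injective ha)
  have hcK : LinearIndependent K c := hcF.restrict_scalars' K
  let W := span F (Set.range c)
  have hWF : finrank F W = a := by rw [finrank_span_eq_card hcF, Fintype.card_fin]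
  have hWK : finrank K (W.restrictScalars K) = finrank K F * a := by
    rw [← hWF]; exact (finrank_mul_finrank K F W).symm
  obtain ⟨U, hcU, hUW, hU⟩ := exists_le_le_finrank_eq (span_le_restrictScalars K F (Set.range c))
    (k := k) (by rwa [finrank_span_eq_card hcK, Fintype.card_fin]) (hWK ▸ hka)
  refine ⟨U, hU, ?_⟩
  have hUspan : span F (U : Set E) = W :=
    le_antisymm (span_le.2 hUW) (span_mono (subset_span.trans hcU))
  rw [hUspan, hWF]

theorem stmt10_general (n r : ℕ)
    (L : Submodule ℤ (Fin (2 * n) → ℤ)) (hL : Module.finrank ℤ L = r) :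
    ∃ φ : (Fin (2 * n) → ℝ) ≃ₗ[ℝ] (Fin n → ℂ),
      Module.finrank ℂ (Submodule.span ℂ
        (φ '' ((fun (x : Fin (2 * n) → ℤ) (i : Fin (2 * n)) => (x i : ℝ)) '' (L : Set (Fin (2 * n) → ℤ))))) = min r n := by
  change ∃ φ : (Fin (2 * n) → ℝ) ≃ₗ[ℝ] (Fin n → ℂ),
    finrank ℂ (span ℂ (φ '' (Pi.algebraMap (Fin (2 * n)) ℤ ℝ '' L))) = min r n
  have hr : r ≤ 2 * n := by simpa [← hL] using L.finrank_le
  have hV := L.finrank_span_image_piAlgebraMap (S := ℝ)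
  obtain ⟨U, hU, hUspan⟩ := exists_finrank_eq_finrank_span_eq (K := ℝ) (F := ℂ) (E := Fin n → ℂ)
    (a := min r n) (k := r) (by simp) (min_le_left r n)
    (by rw [Complex.finrank_real_complex]; omega)
  have hdim : finrank ℝ (Fin (2 * n) → ℝ) = finrank ℝ (Fin n → ℂ) := by
    rw [Module.finrank_fin_fun, Module.finrank_pi_fintype]
    simp [Complex.finrank_real_complex, mul_comm]
  obtain ⟨φ, hφ⟩ := exists_linearEquiv_map_eq hdim (hV.trans (hL.trans hU.symm))
  refine ⟨φ, ?_⟩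
  rw [← span_span_of_tower ℝ, ← LinearEquiv.coe_coe, span_image, hφ, hUspan]

/-- for every `ℤ`-submodule `L` of `ℤ^{2n}` of rank `r`, there is an
`ℝ`-linear isomorphism `φ : ℝ^{2n} ≃ ℂ^n` such that the `ℂ`-linear span of the image of
`L` (included in `ℝ^{2n}` canonically) has complex dimension `min r n`. -/
theorem stmt10 (n r : ℕ) (hn : 1 ≤ n)
    (L : Submodule ℤ (Fin (2 * n) → ℤ)) (hL : Module.finrank ℤ L = r) :
    ∃ φ : (Fin (2 * n) → ℝ) ≃ₗ[ℝ] (Fin n → ℂ),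
      Module.finrank ℂ (Submodule.span ℂ
        (φ '' ((fun (x : Fin (2 * n) → ℤ) (i : Fin (2 * n)) => (x i : ℝ)) '' (L : Set (Fin (2 * n) → ℤ))))) = min r n :=
  stmt10_general n r L hL
end
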